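/- Let S_1,…,S_{n+1} be mutually independent real-valued random variables. For i ∈ {1,…,n}, let 𝐒 = (S_1,…,S_{n+1}) and let 𝐒^i = (S_1,…,S_{i−1}, S_{n+1}, S_{i+1},…,S_n, S_i) be the vector obtained by swapping coordinates i and n+1. Then the total variation distance between the law of 𝐒^i and the law of 𝐒 satisfies TV(𝐒^i, 𝐒) ≤ 2 · TV(S_i, S_{n+1}), where TV(S_i, S_{n+1}) is the total variation distance between the marginal laws of S_i and S_{n+1}. -/

import Mathlib

open MeasureTheory ENNReal

noncomputable section

/-- Total variation distance between two measures:
`TV(μ, ν) = sup_{A measurable} |μ(A) − ν(A)|`. -/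
def tvDist {α : Type*} [MeasurableSpace α] (μ ν : Measure α) : ℝ :=
  ⨆ A : {A : Set α // MeasurableSet A}, |(μ A.1).toReal - (ν A.1).toReal|

/-!
By independence, the laws of the original and of the swapped vector are the product measures
`⊗ⱼ μⱼ` and `⊗ⱼ μ_{σ j}`, which differ only in the two swapped factors. Total variation of
product measures is subadditive in the factors: for `B ⊆ α × β`, `(ρ ⊗ τ)(B) = ∫ τ(Bₓ) dρ(x)`,
and by the layer-cake formula `|∫ f dρ₁ - ∫ f dρ₂| ≤ TV(ρ₁, ρ₂)` whenever `0 ≤ f ≤ 1`.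
Each of the two differing factors contributes `TV(S_i, S_{n+1})`.
-/

section

variable {α β : Type*} [MeasurableSpace α] [MeasurableSpace β]

section Probability
variable (μ ν : Measure α) [IsProbabilityMeasure μ] [IsProbabilityMeasure ν]

lemma bddAbove_range_abs_sub_measureReal :
    BddAbove (Set.range fun A : {A : Set α // MeasurableSet A} => |μ.real A.1 - ν.real A.1|) :=
  ⟨1, by
    rintro _ ⟨A, rfl⟩
    exact abs_sub_le_of_nonneg_of_le measureReal_nonneg measureReal_le_one
      measureReal_nonneg measureReal_le_one⟩

lemma abs_measureReal_sub_le_tvDist {A : Set α} (hA : MeasurableSet A) :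
    |μ.real A - ν.real A| ≤ tvDist μ ν :=
  le_ciSup (bddAbove_range_abs_sub_measureReal μ ν) ⟨A, hA⟩

end Probability

lemma tvDist_le_of_forall {μ ν : Measure α} {c : ℝ}
    (h : ∀ A, MeasurableSet A → |μ.real A - ν.real A| ≤ c) : tvDist μ ν ≤ c :=
  ciSup_le fun A => h A.1 A.2

lemma tvDist_self (μ : Measure α) : tvDist μ μ = 0 := by
  simp [tvDist]

lemma tvDist_comm (μ ν : Measure α) : tvDist μ ν = tvDist ν μ :=
  iSup_congr fun _ => abs_sub_comm _ _

lemma tvDist_triangle (μ₁ μ₂ μ₃ : Measure α) [IsProbabilityMeasure μ₁]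
    [IsProbabilityMeasure μ₂] [IsProbabilityMeasure μ₃] :
    tvDist μ₁ μ₃ ≤ tvDist μ₁ μ₂ + tvDist μ₂ μ₃ :=
  tvDist_le_of_forall fun _ hA => (abs_sub_le _ _ _).trans
    (add_le_add (abs_measureReal_sub_le_tvDist _ _ hA) (abs_measureReal_sub_le_tvDist _ _ hA))

lemma tvDist_map_le (μ ν : Measure α) [IsProbabilityMeasure μ] [IsProbabilityMeasure ν]
    {f : α → β} (hf : Measurable f) : tvDist (μ.map f) (ν.map f) ≤ tvDist μ ν :=
  tvDist_le_of_forall fun _ hA => by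
    rw [map_measureReal_apply hf hA, map_measureReal_apply hf hA]
    exact abs_measureReal_sub_le_tvDist μ ν (hf hA)

lemma abs_integral_sub_integral_le_tvDist (μ ν : Measure α) [IsProbabilityMeasure μ]
    [IsProbabilityMeasure ν] {f : α → ℝ} (hf : Measurable f) (hf0 : 0 ≤ f) (hf1 : f ≤ 1) :
    |∫ a, f a ∂μ - ∫ a, f a ∂ν| ≤ tvDist μ ν := by
  have hint (ρ : Measure α) [IsProbabilityMeasure ρ] :
      IntegrableOn (fun t => ρ.real {a | t ≤ f a}) (Set.Ioc 0 1) := by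
    refine Measure.integrableOn_of_bounded (M := 1) measure_Ioc_lt_top.ne ?_ ?_
    · exact (Antitone.measurable (f := fun t : ℝ => ρ.real {a | t ≤ f a})
        fun s t hst => measureReal_mono fun a ha => hst.trans ha).aestronglyMeasurable
    · exact .of_forall fun t => by
        rw [Real.norm_eq_abs, abs_of_nonneg measureReal_nonneg]
        exact measureReal_le_one
  have hlayer (ρ : Measure α) [IsProbabilityMeasure ρ] :
      ∫ a, f a ∂ρ = ∫ t in Set.Ioc 0 1, ρ.real {a | t ≤ f a} :=
    (Integrable.of_bound hf.aestronglyMeasurable 1 (.of_forall fun a => by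
      simpa [abs_of_nonneg (hf0 a)] using hf1 a)).integral_eq_integral_Ioc_meas_le
      (.of_forall hf0) (.of_forall hf1)
  rw [hlayer μ, hlayer ν, ← integral_sub (hint μ) (hint ν), ← Real.norm_eq_abs]
  refine (norm_setIntegral_le_of_norm_le_const (measure_Ioc_lt_top (μ := volume))
    fun t _ => abs_measureReal_sub_le_tvDist μ ν (measurableSet_le measurable_const hf)).trans ?_
  simp

lemma tvDist_prod_left_le (ρ₁ ρ₂ : Measure α) [IsProbabilityMeasure ρ₁] [IsProbabilityMeasure ρ₂]
    (τ : Measure β) [IsProbabilityMeasure τ] :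
    tvDist (ρ₁.prod τ) (ρ₂.prod τ) ≤ tvDist ρ₁ ρ₂ :=
  tvDist_le_of_forall fun B hB => by
    have hsection : Measurable fun a => τ (Prod.mk a ⁻¹' B) := measurable_measure_prodMk_left hB
    have hprod (ρ : Measure α) [IsProbabilityMeasure ρ] :
        (ρ.prod τ).real B = ∫ a, τ.real (Prod.mk a ⁻¹' B) ∂ρ := by
      rw [measureReal_def, Measure.prod_apply hB,
        ← integral_toReal hsection.aemeasurable (.of_forall fun _ => measure_lt_top _ _)]
      rfl
    rw [hprod ρ₁, hprod ρ₂]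
    exact abs_integral_sub_integral_le_tvDist ρ₁ ρ₂ hsection.ennreal_toReal
      (fun _ => measureReal_nonneg) (fun _ => measureReal_le_one)

lemma tvDist_prod_le_add (ρ₁ ρ₂ : Measure α) [IsProbabilityMeasure ρ₁] [IsProbabilityMeasure ρ₂]
    (τ₁ τ₂ : Measure β) [IsProbabilityMeasure τ₁] [IsProbabilityMeasure τ₂] :
    tvDist (ρ₁.prod τ₁) (ρ₂.prod τ₂) ≤ tvDist ρ₁ ρ₂ + tvDist τ₁ τ₂ := by
  have hright : tvDist (ρ₂.prod τ₁) (ρ₂.prod τ₂) ≤ tvDist τ₁ τ₂ := by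
    rw [← Measure.prod_swap (μ := τ₁), ← Measure.prod_swap (μ := τ₂)]
    exact (tvDist_map_le _ _ measurable_swap).trans (tvDist_prod_left_le τ₁ τ₂ ρ₂)
  exact (tvDist_triangle _ (ρ₂.prod τ₁) _).trans
    (add_le_add (tvDist_prod_left_le ρ₁ ρ₂ τ₁) hright)

lemma tvDist_pi_le_sum : ∀ {n : ℕ} {α : Fin n → Type*} [∀ i, MeasurableSpace (α i)]
    (ν μ : ∀ i, Measure (α i)) [∀ i, IsProbabilityMeasure (ν i)]
    [∀ i, IsProbabilityMeasure (μ i)],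
    tvDist (Measure.pi ν) (Measure.pi μ) ≤ ∑ i, tvDist (ν i) (μ i)
  | 0, _, _, ν, μ, _, _ => by
    rw [Measure.pi_of_empty ν, Measure.pi_of_empty μ, tvDist_self, Finset.univ_eq_empty,
      Finset.sum_empty]
  | n + 1, α, _, ν, μ, _, _ => by
    have hpi (ρ : ∀ i, Measure (α i)) [∀ i, IsProbabilityMeasure (ρ i)] :
        Measure.pi ρ = ((ρ 0).prod (Measure.pi fun j => ρ (Fin.succAbove 0 j))).map
          (MeasurableEquiv.piFinSuccAbove α 0).symm :=
      ((measurePreserving_piFinSuccAbove ρ 0).symm _).map_eq.symm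
    rw [hpi ν, hpi μ, Fin.sum_univ_succAbove _ 0]
    exact (tvDist_map_le _ _ (MeasurableEquiv.measurable _)).trans
      ((tvDist_prod_le_add _ _ _ _).trans (add_le_add le_rfl (tvDist_pi_le_sum _ _)))

lemma tvDist_pi_swap_le {n : ℕ} (μ : Fin n → Measure α) [∀ i, IsProbabilityMeasure (μ i)]
    {a b : Fin n} (hab : a ≠ b) :
    tvDist (Measure.pi fun i => μ (Equiv.swap a b i)) (Measure.pi μ) ≤ 2 * tvDist (μ a) (μ b) := by
  have hsum : ∑ i, tvDist (μ (Equiv.swap a b i)) (μ i) = 2 * tvDist (μ a) (μ b) := by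
    rw [Fintype.sum_eq_add a b hab fun c hc => by
      rw [Equiv.swap_apply_of_ne_of_ne hc.1 hc.2, tvDist_self], Equiv.swap_apply_left,
      Equiv.swap_apply_right, tvDist_comm (μ b), two_mul]
  exact hsum ▸ tvDist_pi_le_sum _ _

end

/-- **For independent scores, the TV distance between the swapped score vector and the
original score vector is at most twice the TV distance of the swapped marginals.** -/
theorem tv_swap_le_two_tv
    {Ω : Type*} [MeasurableSpace Ω] (P : Measure Ω) [IsProbabilityMeasure P]
    (n : ℕ) (S : Fin (n + 1) → Ω → ℝ) (hS : ∀ i, Measurable (S i))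
    (hindep : ProbabilityTheory.iIndepFun
      (m := fun _ : Fin (n + 1) => (inferInstance : MeasurableSpace ℝ)) S P)
    (i : Fin n) :
    tvDist (P.map fun ω => fun j => S (Equiv.swap i.castSucc (Fin.last n) j) ω)
        (P.map fun ω => fun j => S j ω)
      ≤ 2 * tvDist (P.map (S i.castSucc)) (P.map (S (Fin.last n))) := by
  have : ∀ j, IsProbabilityMeasure (P.map (S j)) := fun j =>
    Measure.isProbabilityMeasure_map (hS j).aemeasurable
  set σ := Equiv.swap i.castSucc (Fin.last n)
  have hlaw_swap := (hindep.precomp σ.injective).map_fun_eq_pi_map fun j => (hS (σ j)).aemeasurable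
  rw [hlaw_swap, hindep.map_fun_eq_pi_map fun j => (hS j).aemeasurable]
  exact tvDist_pi_swap_le (fun j => P.map (S j)) (Fin.castSucc_lt_last i).ne
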